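/- Let σ₁, σ₂, σ₃ > 0 with ρ := σ₃²/(σ₁σ₂) < 1. Then ∫_{ℝ} ∫_{−∞}^0 ∫_{−∞}^0 (σ₁σ₂ z₁z₂ − σ₃² z₃²) · 1_{σ₁σ₂ z₁z₂ − σ₃² z₃² > 0} · φ(z₃) · P_ρ(z₁,z₂) dz₁ dz₂ dz₃ = 2 ∫_{ℝ²} g(z₁, z₂, 0 | σ₁², σ₂², σ₃²) · P_ρ(z₁,z₂) dz₁ dz₂. (This evaluates the denominator J₁ = E[|det(∇²X)| 1_{∇²X ≺ 0}] in the peak height density of a planar stationary Gaussian field whose Hessian entries (X₁₁, X₂₂, X₁₂) are centered Gaussian with variances σ₁², σ₂², σ₃², with X₁₂ independent of (X₁₁, X₂₂) and E[X₁₁X₂₂] = σ₃².) -/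

import Mathlib

open MeasureTheory Real

/-- The standard normal pdf. -/
noncomputable def stdPdf (x : ℝ) : ℝ := (Real.sqrt (2 * Real.pi))⁻¹ * Real.exp (-x ^ 2 / 2)

/-- The standard normal cdf. -/
noncomputable def stdCdf (x : ℝ) : ℝ := ∫ s in Set.Iio x, stdPdf s

/-- The joint density of a standard bivariate normal vector with correlation ρ. -/
noncomputable def binormPdf (ρ x y : ℝ) : ℝ :=
  (2 * Real.pi * Real.sqrt (1 - ρ ^ 2))⁻¹ *
    Real.exp (-(x ^ 2 - 2 * ρ * x * y + y ^ 2) / (2 * (1 - ρ ^ 2)))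

/-- The function `g(z₁, z₂, x | a₁², a₂², a₃²)`, where `a₁, a₂, a₃ > 0` are the (unsquared)
parameters and `b = a₃²/(a₁a₂)`. -/
noncomputable def gFun (z₁ z₂ x a₁ a₂ a₃ : ℝ) : ℝ :=
  a₁ * a₂ *
      (((z₁ - x / a₁) * (z₂ - x / a₂) - a₃ ^ 2 / (a₁ * a₂)) *
          (stdCdf (Real.sqrt ((z₁ - x / a₁) * (z₂ - x / a₂) / (a₃ ^ 2 / (a₁ * a₂)))) - 1 / 2) +
        Real.sqrt (a₃ ^ 2 / (a₁ * a₂) * ((z₁ - x / a₁) * (z₂ - x / a₂))) *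
          stdPdf (Real.sqrt ((z₁ - x / a₁) * (z₂ - x / a₂) / (a₃ ^ 2 / (a₁ * a₂))))) *
    (if z₁ < x / a₁ then (1 : ℝ) else 0) * (if z₂ < x / a₂ then (1 : ℝ) else 0)


/-!
Integrating out `z₃` first, the innermost integral is a Gaussian expectation of a truncated
quadratic: with `p = σ₁σ₂z₁z₂ > 0` and `t = √p / σ₃`, the function
`(p - σ₃²) Φ(z) + σ₃² z φ(z)` is an antiderivative of `(p - σ₃² z²) φ(z)` (because `φ' = -zφ`), so
`∫ (p - σ₃²z²)₊ φ = (p - σ₃²)(2Φ(t) - 1) + 2σ₃² t φ(t)`, which is exactly `2 g(z₁, z₂, 0)`.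
Fubini is justified by `(p - σ₃²z₃²)₊ ≤ σ₁σ₂|z₁||z₂|` and the Gaussian tails of `P_ρ`;
finally `g(·, ·, 0)` vanishes off the negative quadrant.
-/

open Set

lemma stdPdf_nonneg (x : ℝ) : 0 ≤ stdPdf x := by
  unfold stdPdf; positivity

lemma stdPdf_neg (x : ℝ) : stdPdf (-x) = stdPdf x := by
  simp [stdPdf]

@[fun_prop]
lemma continuous_stdPdf : Continuous stdPdf := by
  unfold stdPdf; fun_prop

lemma stdPdf_eq_mul_exp_neg_mul_sq (x : ℝ) :
    stdPdf x = (√(2 * π))⁻¹ * exp (-(1 / 2) * x ^ 2) := by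
  unfold stdPdf; ring_nf

lemma integrable_stdPdf : Integrable stdPdf := by
  simp_rw [funext stdPdf_eq_mul_exp_neg_mul_sq]
  exact (integrable_exp_neg_mul_sq (by norm_num)).const_mul _

lemma integral_stdPdf : ∫ x, stdPdf x = 1 := by
  simp_rw [stdPdf_eq_mul_exp_neg_mul_sq]
  rw [integral_const_mul, integral_gaussian, show π / (1 / 2) = 2 * π by ring]
  exact inv_mul_cancel₀ (by positivity)

lemma hasDerivAt_stdPdf (x : ℝ) : HasDerivAt stdPdf (-x * stdPdf x) x := by
  have hexp : HasDerivAt (fun y : ℝ => -y ^ 2 / 2) (-x) x := by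
    refine (((hasDerivAt_pow 2 x).neg).div_const 2).congr_deriv ?_
    simp only [Nat.cast_ofNat, Nat.add_one_sub_one, pow_one]; ring
  refine (hexp.exp.const_mul (√(2 * π))⁻¹).congr_deriv (f := stdPdf) ?_
  unfold stdPdf; ring

lemma stdCdf_sub_stdCdf {a b : ℝ} (h : a ≤ b) : stdCdf b - stdCdf a = ∫ x in a..b, stdPdf x := by
  unfold stdCdf
  rw [← integral_Iic_eq_integral_Iio, ← integral_Iic_eq_integral_Iio,
    intervalIntegral.integral_Iic_sub_Iic integrable_stdPdf.integrableOn
      integrable_stdPdf.integrableOn, intervalIntegral.integral_of_le h]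

lemma hasDerivAt_stdCdf (x : ℝ) : HasDerivAt stdCdf (stdPdf x) x := by
  have hcdf : ∀ y, stdCdf y = (∫ t in (0 : ℝ)..y, stdPdf t) + stdCdf 0 := by
    intro y
    rcases le_total 0 y with h | h
    · rw [← stdCdf_sub_stdCdf h]; ring
    · rw [intervalIntegral.integral_symm, ← stdCdf_sub_stdCdf h]; ring
  refine HasDerivAt.congr_of_eventuallyEq ?_ (Filter.Eventually.of_forall hcdf)
  exact (intervalIntegral.integral_hasDerivAt_right integrable_stdPdf.intervalIntegrable
    (continuous_stdPdf.stronglyMeasurableAtFilter _ _) continuous_stdPdf.continuousAt).add_const _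

lemma stdCdf_neg (t : ℝ) : stdCdf (-t) = 1 - stdCdf t := by
  have hIoi : stdCdf (-t) = ∫ x in Ioi t, stdPdf x := by
    unfold stdCdf
    rw [← integral_Iic_eq_integral_Iio, ← integral_comp_neg_Ioi]
    simp_rw [stdPdf_neg]
  have htotal : stdCdf t + ∫ x in Ioi t, stdPdf x = 1 := by
    unfold stdCdf
    rw [← integral_Iic_eq_integral_Iio, intervalIntegral.integral_Iic_add_Ioi
      integrable_stdPdf.integrableOn integrable_stdPdf.integrableOn, integral_stdPdf]
  linarith

lemma integral_posPart_sub_mul_sq_mul_stdPdf {p σ : ℝ} (hp : 0 < p) (hσ : 0 < σ) :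
    ∫ z, (p - σ ^ 2 * z ^ 2) * (if p - σ ^ 2 * z ^ 2 > 0 then (1 : ℝ) else 0) * stdPdf z
      = (p - σ ^ 2) * (2 * stdCdf (√p / σ) - 1) + 2 * σ ^ 2 * (√p / σ) * stdPdf (√p / σ) := by
  set t := √p / σ
  have ht : 0 < t := by positivity
  have hp_eq : p = σ ^ 2 * t ^ 2 := by
    rw [div_pow, sq_sqrt hp.le]; field_simp
  have hpos_iff : ∀ z, p - σ ^ 2 * z ^ 2 > 0 ↔ z ∈ Ioo (-t) t := by
    intro z
    have hfactor : p - σ ^ 2 * z ^ 2 = σ ^ 2 * (t ^ 2 - z ^ 2) := by rw [hp_eq]; ring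
    rw [hfactor, mem_Ioo, ← abs_lt, gt_iff_lt, mul_pos_iff_of_pos_left (by positivity), sub_pos,
      sq_lt_sq, abs_of_pos ht]
  have hindicator : (fun z => (p - σ ^ 2 * z ^ 2) *
      (if p - σ ^ 2 * z ^ 2 > 0 then (1 : ℝ) else 0) * stdPdf z)
      = (Ioo (-t) t).indicator (fun z => (p - σ ^ 2 * z ^ 2) * stdPdf z) := by
    ext z
    by_cases h : p - σ ^ 2 * z ^ 2 > 0
    · simp [h, indicator_of_mem ((hpos_iff z).1 h)]
    · simp [h, indicator_of_notMem (mt (hpos_iff z).2 h)]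
  have hderiv : ∀ z ∈ uIcc (-t) t,
      HasDerivAt (fun y => (p - σ ^ 2) * stdCdf y + σ ^ 2 * (y * stdPdf y))
        ((p - σ ^ 2 * z ^ 2) * stdPdf z) z := by
    intro z _
    refine (((hasDerivAt_stdCdf z).const_mul (p - σ ^ 2)).add
      (((hasDerivAt_id z).mul (hasDerivAt_stdPdf z)).const_mul (σ ^ 2))).congr_deriv ?_
    simp only [id_eq, one_mul]
    ring
  rw [hindicator, integral_indicator measurableSet_Ioo, ← integral_Ioc_eq_integral_Ioo,
    ← intervalIntegral.integral_of_le (by linarith),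
    intervalIntegral.integral_eq_sub_of_hasDerivAt hderiv
      ((by fun_prop : Continuous fun z => (p - σ ^ 2 * z ^ 2) * stdPdf z).intervalIntegrable _ _),
    stdCdf_neg, stdPdf_neg]
  ring

lemma binormPdf_comm (ρ x y : ℝ) : binormPdf ρ x y = binormPdf ρ y x := by
  unfold binormPdf; ring_nf

lemma binormPdf_nonneg (ρ x y : ℝ) : 0 ≤ binormPdf ρ x y := by
  unfold binormPdf; positivity

@[fun_prop]
lemma Continuous.binormPdf {α : Type*} [TopologicalSpace α] {f g : α → ℝ} (ρ : ℝ)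
    (hf : Continuous f) (hg : Continuous g) : Continuous fun a => binormPdf ρ (f a) (g a) := by
  unfold _root_.binormPdf; fun_prop

lemma binormPdf_le_mul_exp_mul_exp {ρ : ℝ} (hρ : |ρ| < 1) (x y : ℝ) :
    binormPdf ρ x y ≤ (2 * π * √(1 - ρ ^ 2))⁻¹ *
      (exp (-(1 / (2 * (1 + |ρ|))) * x ^ 2) * exp (-(1 / (2 * (1 + |ρ|))) * y ^ 2)) := by
  have hρ' : ρ ^ 2 < 1 := by rw [← sq_abs]; nlinarith [abs_nonneg ρ]
  unfold binormPdf
  gcongr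
  rw [← exp_add, exp_le_exp, div_le_iff₀ (by linarith)]
  have hquad :
      (-(1 / (2 * (1 + |ρ|))) * x ^ 2 + -(1 / (2 * (1 + |ρ|))) * y ^ 2) * (2 * (1 - ρ ^ 2))
        = -((1 - |ρ|) * (x ^ 2 + y ^ 2)) := by
    rw [← sq_abs ρ]
    field_simp
    ring
  have hcross : 2 * (ρ * x * y) ≤ |ρ| * (x ^ 2 + y ^ 2) := by
    have h := two_mul_le_add_sq |x| |y|
    rw [sq_abs, sq_abs] at h
    calc 2 * (ρ * x * y) ≤ 2 * |ρ * x * y| := by gcongr; exact le_abs_self _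
      _ = |ρ| * (2 * |x| * |y|) := by rw [abs_mul, abs_mul]; ring
      _ ≤ |ρ| * (x ^ 2 + y ^ 2) := by gcongr
  rw [hquad]
  linarith

lemma integrable_abs_mul_exp_neg_mul_sq {c : ℝ} (hc : 0 < c) :
    Integrable fun x : ℝ => |x| * exp (-c * x ^ 2) := by
  simpa only [abs_mul, abs_of_pos (exp_pos _)] using (integrable_mul_exp_neg_mul_sq hc).abs

lemma integrable_abs_mul_abs_mul_binormPdf {ρ : ℝ} (hρ : |ρ| < 1) :
    Integrable fun z : ℝ × ℝ => |z.1| * |z.2| * binormPdf ρ z.1 z.2 := by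
  set c := 1 / (2 * (1 + |ρ|))
  have hg := integrable_abs_mul_exp_neg_mul_sq (c := c) (by positivity)
  refine ((hg.mul_prod hg).const_mul (2 * π * √(1 - ρ ^ 2))⁻¹).mono'
    (by fun_prop : Continuous _).aestronglyMeasurable (Filter.Eventually.of_forall fun z => ?_)
  rw [norm_of_nonneg (by have := binormPdf_nonneg ρ z.1 z.2; positivity)]
  calc |z.1| * |z.2| * binormPdf ρ z.1 z.2
      ≤ |z.1| * |z.2| * ((2 * π * √(1 - ρ ^ 2))⁻¹ *
        (exp (-c * z.1 ^ 2) * exp (-c * z.2 ^ 2))) := by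
        gcongr; exact binormPdf_le_mul_exp_mul_exp hρ _ _
    _ = _ := by ring

lemma mul_ite_pos_eq_max (x : ℝ) : x * (if x > 0 then (1 : ℝ) else 0) = max x 0 := by
  split_ifs with h
  · rw [mul_one, max_eq_left h.le]
  · rw [mul_zero, max_eq_right (not_lt.1 h)]

lemma integrable_posPart_mul_stdPdf_mul_binormPdf {a c ρ : ℝ} (hc : 0 ≤ c) (hρ : |ρ| < 1) :
    Integrable fun q : ℝ × ℝ × ℝ => (a * q.2.2 * q.2.1 - c * q.1 ^ 2) *
      (if a * q.2.2 * q.2.1 - c * q.1 ^ 2 > 0 then (1 : ℝ) else 0) * stdPdf q.1 *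
        binormPdf ρ q.2.2 q.2.1 := by
  simp_rw [mul_ite_pos_eq_max]
  have hdom := (integrable_stdPdf.mul_prod (integrable_abs_mul_abs_mul_binormPdf hρ)).const_mul |a|
  refine hdom.mono'
    (by fun_prop : Continuous _).aestronglyMeasurable (Filter.Eventually.of_forall fun q => ?_)
  have hmax : |max (a * q.2.2 * q.2.1 - c * q.1 ^ 2) 0| ≤ |a| * (|q.2.1| * |q.2.2|) := by
    rw [abs_of_nonneg (le_max_right _ _), ← abs_mul, ← abs_mul]
    refine max_le ?_ (abs_nonneg _)
    nlinarith [le_abs_self (a * (q.2.1 * q.2.2)), mul_nonneg hc (sq_nonneg q.1)]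
  rw [norm_mul, norm_mul, norm_of_nonneg (stdPdf_nonneg _),
    norm_of_nonneg (binormPdf_nonneg _ _ _), binormPdf_comm]
  calc |max (a * q.2.2 * q.2.1 - c * q.1 ^ 2) 0| * stdPdf q.1 * binormPdf ρ q.2.1 q.2.2
      ≤ |a| * (|q.2.1| * |q.2.2|) * stdPdf q.1 * binormPdf ρ q.2.1 q.2.2 := by
        gcongr
        · exact binormPdf_nonneg _ _ _
        · exact stdPdf_nonneg _
    _ = _ := by ring

lemma two_mul_gFun {z₁ z₂ x σ₁ σ₂ σ₃ : ℝ} (h₁ : 0 < σ₁) (h₂ : 0 < σ₂) (h₃ : 0 < σ₃)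
    (hz₁ : z₁ < x / σ₁) (hz₂ : z₂ < x / σ₂) :
    2 * gFun z₁ z₂ x σ₁ σ₂ σ₃ = ∫ z, (σ₁ * σ₂ * (z₁ - x / σ₁) * (z₂ - x / σ₂) - σ₃ ^ 2 * z ^ 2) *
      (if σ₁ * σ₂ * (z₁ - x / σ₁) * (z₂ - x / σ₂) - σ₃ ^ 2 * z ^ 2 > 0 then (1 : ℝ) else 0) *
        stdPdf z := by
  have hp : 0 < σ₁ * σ₂ * (z₁ - x / σ₁) * (z₂ - x / σ₂) := by
    have := mul_pos_of_neg_of_neg (sub_neg.2 hz₁) (sub_neg.2 hz₂)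
    rw [mul_assoc]; positivity
  rw [integral_posPart_sub_mul_sq_mul_stdPdf hp h₃]
  unfold gFun
  rw [if_pos hz₁, if_pos hz₂]
  set u := z₁ - x / σ₁
  set v := z₂ - x / σ₂
  set q := √(σ₁ * σ₂ * u * v)
  have hq : q ^ 2 = σ₁ * σ₂ * u * v := sq_sqrt hp.le
  have hsqrt_div : √(u * v / (σ₃ ^ 2 / (σ₁ * σ₂))) = q / σ₃ := by
    rw [show u * v / (σ₃ ^ 2 / (σ₁ * σ₂)) = (q / σ₃) ^ 2 by rw [div_pow, hq]; field_simp]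
    exact sqrt_sq (by positivity)
  have hsqrt_mul : √(σ₃ ^ 2 / (σ₁ * σ₂) * (u * v)) = σ₃ * q / (σ₁ * σ₂) := by
    rw [show σ₃ ^ 2 / (σ₁ * σ₂) * (u * v) = (σ₃ * q / (σ₁ * σ₂)) ^ 2 by
      rw [div_pow, mul_pow, hq]; field_simp]
    exact sqrt_sq (by positivity)
  rw [hsqrt_div, hsqrt_mul]
  field_simp

lemma gFun_eq_zero_of_notMem {z₁ z₂ x a₁ a₂ a₃ : ℝ}
    (h : (z₁, z₂) ∉ Iio (x / a₁) ×ˢ Iio (x / a₂)) : gFun z₁ z₂ x a₁ a₂ a₃ = 0 := by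
  simp only [mem_prod, mem_Iio, not_and_or] at h
  unfold gFun
  rcases h with h | h
  · rw [if_neg h]; ring
  · rw [if_neg h]; ring

lemma integral_integral_integral_eq_integral_integral {α β γ : Type*} [MeasurableSpace α]
    [MeasurableSpace β] [MeasurableSpace γ] {μ : Measure α} {ν : Measure β} {κ : Measure γ}
    [SFinite μ] [SFinite ν] [SFinite κ] {F : α → β → γ → ℝ}
    (hF : Integrable (fun q : α × β × γ => F q.1 q.2.1 q.2.2) (μ.prod (ν.prod κ))) :
    ∫ x, ∫ y, ∫ z, F x y z ∂κ ∂ν ∂μ = ∫ w, ∫ x, F x w.1 w.2 ∂μ ∂(ν.prod κ) := by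
  refine (integral_congr_ae ?_).trans
    (integral_integral_swap (f := fun x (w : β × γ) => F x w.1 w.2) hF)
  filter_upwards [hF.prod_right_ae] with x hx
  exact (integral_prod _ hx).symm

theorem stmt_5 (σ₁ σ₂ σ₃ : ℝ) (h₁ : 0 < σ₁) (h₂ : 0 < σ₂) (h₃ : 0 < σ₃)
    (hρ : σ₃ ^ 2 / (σ₁ * σ₂) < 1) :
    (∫ z₃ : ℝ, ∫ z₂ in Set.Iio (0 : ℝ), ∫ z₁ in Set.Iio (0 : ℝ),
        (σ₁ * σ₂ * z₁ * z₂ - σ₃ ^ 2 * z₃ ^ 2) *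
          (if σ₁ * σ₂ * z₁ * z₂ - σ₃ ^ 2 * z₃ ^ 2 > 0 then (1 : ℝ) else 0) *
          stdPdf z₃ * binormPdf (σ₃ ^ 2 / (σ₁ * σ₂)) z₁ z₂) =
      2 * ∫ z : ℝ × ℝ, gFun z.1 z.2 0 σ₁ σ₂ σ₃ * binormPdf (σ₃ ^ 2 / (σ₁ * σ₂)) z.1 z.2 := by
  set ρ := σ₃ ^ 2 / (σ₁ * σ₂)
  have hρ_abs : |ρ| < 1 := by rwa [abs_of_pos (by positivity)]
  have hF := (integrable_posPart_mul_stdPdf_mul_binormPdf (a := σ₁ * σ₂) (sq_nonneg σ₃)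
    hρ_abs).mono_measure (Measure.prod_mono le_rfl (Measure.prod_mono
      (Measure.restrict_le_self (s := Iio (0 : ℝ))) (Measure.restrict_le_self (s := Iio (0 : ℝ)))))
  rw [integral_integral_integral_eq_integral_integral hF, Measure.prod_restrict,
    Measure.volume_eq_prod, ← integral_prod_swap, ← integral_const_mul]
  simp only [Prod.fst_swap, Prod.snd_swap]
  rw [← setIntegral_eq_integral_of_forall_compl_eq_zero (s := Iio (0 : ℝ) ×ˢ Iio (0 : ℝ))
      (f := fun w => 2 * (gFun w.2 w.1 0 σ₁ σ₂ σ₃ * binormPdf ρ w.2 w.1))]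
  · refine setIntegral_congr_fun ((measurableSet_Iio (a := (0 : ℝ))).prod measurableSet_Iio)
      fun w ⟨hw₁, hw₂⟩ => ?_
    rw [integral_mul_const, ← mul_assoc,
      two_mul_gFun (x := 0) h₁ h₂ h₃ (by simpa using hw₂) (by simpa using hw₁)]
    simp only [zero_div, sub_zero]
  · intro w hw
    rw [gFun_eq_zero_of_notMem, zero_mul, mul_zero]
    simpa [and_comm] using hw
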